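/- arXiv:2008.11707 — 2 statements merged into one kernel-verified Lean document; each statement's English description precedes it below -/
import Mathlib

section
/- Let W and B be nonempty subsets of ℝ^d, let μ ∈ B, and let ĉ, c̄ : W → ℝ^d be functions assigning a predicted and a true expected label to each action. Suppose the pair (w, ν̃) ∈ W × B jointly minimizes (u, ν) ↦ ⟨ĉ(u) + ν, u⟩ over W × B, and w* ∈ W minimizes u ↦ ⟨c̄(u) + μ, u⟩ over W. Then ⟨c̄(w) + μ, w⟩ − ⟨c̄(w*) + μ, w*⟩ ≤ ⟨c̄(w) − ĉ(w), w⟩ + ⟨ĉ(w*) − c̄(w*), w*⟩ + ⟨μ − ν̃, w⟩. -/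
open scoped RealInnerProductSpace

theorem stmt4 (d : ℕ) (W B : Set (EuclideanSpace ℝ (Fin d)))
    (hW : W.Nonempty) (hB : B.Nonempty)
    (mu : EuclideanSpace ℝ (Fin d)) (hmu : mu ∈ B)
    (chat cbar : EuclideanSpace ℝ (Fin d) → EuclideanSpace ℝ (Fin d))
    (w wstar nutilde : EuclideanSpace ℝ (Fin d))
    (hw : w ∈ W) (hnu : nutilde ∈ B) (hwstar : wstar ∈ W)
    (hmin : ∀ u ∈ W, ∀ nu ∈ B, ⟪chat w + nutilde, w⟫ ≤ ⟪chat u + nu, u⟫)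
    (hminstar : ∀ u ∈ W, ⟪cbar wstar + mu, wstar⟫ ≤ ⟪cbar u + mu, u⟫) :
    ⟪cbar w + mu, w⟫ - ⟪cbar wstar + mu, wstar⟫ ≤
      ⟪cbar w - chat w, w⟫ + ⟪chat wstar - cbar wstar, wstar⟫ + ⟪mu - nutilde, w⟫ := by
  have h := hmin wstar hwstar mu hmu
  simp only [inner_add_left, inner_sub_left] at *
  linarith
end

section
/- Let K_F, K_X > 0 and let x_1, …, x_n be vectors in ℝ^m with ‖x_i‖₂ ≤ K_X for all i. Let σ be drawn from the uniform probability measure on {−1, 1}^{n×d}. Then E_σ[ sup { (1/n) ∑_{i=1}^n ∑_{k=1}^d σ_{ik} (F x_i)_k : F a d×m real matrix with |F_{kj}| ≤ K_F for all entries } ] ≤ d · m · K_F · K_X / √n. -/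
open MeasureTheory

/-- `rademacherSign b` is `1` if `b = true` and `-1` otherwise, so that a uniform random
Boolean encodes a uniform Rademacher sign in `{-1, 1}`. -/
noncomputable def rademacherSign (b : Bool) : ℝ := if b then 1 else -1

/-!
Writing `∑ᵢ ∑ₖ σᵢₖ (F xᵢ)ₖ = ∑ₖ ∑ⱼ Fₖⱼ Zₖⱼ` with `Zₖⱼ = ∑ᵢ σᵢₖ xᵢⱼ`, the supremum over the box
`|Fₖⱼ| ≤ K_F` is at most `K_F ∑ₖ ∑ⱼ |Zₖⱼ|`. For fixed `k` the signs `σ₁ₖ, …, σₙₖ` are orthonormal,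
so by Cauchy–Schwarz `𝔼 |Zₖⱼ| ≤ (𝔼 Zₖⱼ²)^{1/2} = (∑ᵢ xᵢⱼ²)^{1/2} ≤ √n K_X`. Summing over the `d m`
entries and dividing by `n` gives `d m K_F K_X / √n`.
-/

open Finset Matrix
open scoped BigOperators

theorem integral_uniformOfFintype_eq_expect {α : Type*} [Fintype α] [Nonempty α]
    [MeasurableSpace α] [MeasurableSingletonClass α] (f : α → ℝ) :
    ∫ a, f a ∂(PMF.uniformOfFintype α).toMeasure = 𝔼 a, f a := by
  simp [PMF.integral_eq_sum, Fintype.expect_eq_sum_div_card, mul_sum, div_eq_inv_mul]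

section Orthonormal

variable {Ω ι : Type*} [Fintype Ω] [Fintype ι] [DecidableEq ι]

theorem expect_sq_sum_mul_eq_sum_sq {s : Ω → ι → ℝ}
    (hs : ∀ i j, 𝔼 ω, s ω i * s ω j = if i = j then 1 else 0) (a : ι → ℝ) :
    𝔼 ω, (∑ i, s ω i * a i) ^ 2 = ∑ i, a i ^ 2 := by
  calc 𝔼 ω, (∑ i, s ω i * a i) ^ 2
      = ∑ i, ∑ j, a i * a j * 𝔼 ω, s ω i * s ω j := by
        simp_rw [sq, sum_mul_sum, expect_sum_comm, mul_expect]
        congr! 3 with i - j - ω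
        ring
    _ = ∑ i, a i ^ 2 := by simp [hs, sq]

theorem expect_abs_sum_mul_le_sqrt_sum_sq [Nonempty Ω] {s : Ω → ι → ℝ}
    (hs : ∀ i j, 𝔼 ω, s ω i * s ω j = if i = j then 1 else 0) (a : ι → ℝ) :
    𝔼 ω, |∑ i, s ω i * a i| ≤ √(∑ i, a i ^ 2) := by
  refine (le_abs_self _).trans (Real.abs_le_sqrt ?_)
  simpa [sq_abs, expect_sq_sum_mul_eq_sum_sq hs] using
    expect_mul_sq_le_sq_mul_sq univ (fun ω ↦ |∑ i, s ω i * a i|) 1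

end Orthonormal

theorem rademacherSign_not (b : Bool) : rademacherSign (!b) = -rademacherSign b := by
  cases b <;> simp [rademacherSign]

theorem rademacherSign_mul_self (b : Bool) : rademacherSign b * rademacherSign b = 1 := by
  cases b <;> simp [rademacherSign]

theorem expect_rademacherSign_mul_rademacherSign {ι : Type*} [Fintype ι] [DecidableEq ι]
    (i j : ι) :
    𝔼 σ : ι → Bool, rademacherSign (σ i) * rademacherSign (σ j) = if i = j then 1 else 0 := by
  split_ifs with hij
  · simp [hij, rademacherSign_mul_self]
  -- flipping the sign at `i` is a bijection that negates the summand
  have hflip : Function.Involutive fun σ : ι → Bool ↦ Function.update σ i (!σ i) :=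
    fun σ ↦ by simp
  have hneg := Fintype.expect_bijective _ hflip.bijective
    (fun σ ↦ rademacherSign (σ i) * rademacherSign (σ j))
    (fun σ ↦ -(rademacherSign (σ i) * rademacherSign (σ j))) fun σ ↦ by
      simp [Function.update_of_ne (Ne.symm hij), rademacherSign_not]
  rw [expect_neg_distrib] at hneg
  linarith

theorem expect_rademacherSign_mul_rademacherSign_curry {ι κ : Type*} [Fintype ι]
    [DecidableEq ι] [Fintype κ] [DecidableEq κ] (k : κ) (i j : ι) :
    𝔼 σ : ι → κ → Bool, rademacherSign (σ i k) * rademacherSign (σ j k) =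
      if i = j then 1 else 0 := by
  rw [← Fintype.expect_equiv (Equiv.curry ι κ Bool)
    (fun τ ↦ rademacherSign (τ (i, k)) * rademacherSign (τ (j, k))) _ fun _ ↦ rfl,
    expect_rademacherSign_mul_rademacherSign]
  simp

theorem sum_sum_mul_mulVec {ι κ μ : Type*} [Fintype ι] [Fintype κ] [Fintype μ]
    (s : ι → κ → ℝ) (F : Matrix κ μ ℝ) (v : ι → μ → ℝ) :
    ∑ i, ∑ k, s i k * (F *ᵥ v i) k = ∑ k, ∑ j, F k j * ∑ i, s i k * v i j := by
  simp_rw [mulVec, dotProduct, mul_sum]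
  rw [sum_comm]
  refine sum_congr rfl fun k _ ↦ ?_
  rw [sum_comm]
  exact sum_congr rfl fun j _ ↦ sum_congr rfl fun i _ ↦ by ring

theorem sum_sum_mul_le_of_abs_le {κ μ : Type*} [Fintype κ] [Fintype μ] {F : Matrix κ μ ℝ}
    {K : ℝ} (hF : ∀ k j, |F k j| ≤ K) (G : Matrix κ μ ℝ) :
    ∑ k, ∑ j, F k j * G k j ≤ K * ∑ k, ∑ j, |G k j| := by
  simp_rw [mul_sum]
  refine sum_le_sum fun k _ ↦ sum_le_sum fun j _ ↦ ?_
  calc F k j * G k j ≤ |F k j| * |G k j| := (le_abs_self _).trans (abs_mul _ _).le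
    _ ≤ K * |G k j| := by gcongr; exact hF k j

theorem sSup_image_sum_sum_mul_mulVec_le {ι κ μ : Type*} [Fintype ι] [Fintype κ] [Fintype μ]
    {c K : ℝ} (hc : 0 ≤ c) (hK : 0 ≤ K) (s : ι → κ → ℝ) (v : ι → μ → ℝ) :
    sSup ((fun F : Matrix κ μ ℝ ↦ c * ∑ i, ∑ k, s i k * (F *ᵥ v i) k) ''
        {F | ∀ k j, |F k j| ≤ K}) ≤
      c * (K * ∑ k, ∑ j, |∑ i, s i k * v i j|) := by
  refine Real.sSup_le ?_ (by positivity)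
  rintro _ ⟨F, hF, rfl⟩
  dsimp only
  rw [sum_sum_mul_mulVec]
  gcongr
  exact sum_sum_mul_le_of_abs_le hF _

theorem sqrt_sum_sq_apply_le {ι μ : Type*} [Fintype ι] [Fintype μ]
    {x : ι → EuclideanSpace ℝ μ} {K : ℝ} (hK : 0 ≤ K) (hx : ∀ i, ‖x i‖ ≤ K) (j : μ) :
    √(∑ i, x i j ^ 2) ≤ √(Fintype.card ι) * K := by
  have hcoord : ∀ i, x i j ^ 2 ≤ K ^ 2 := fun i ↦
    sq_le_sq' (neg_le_of_abs_le ((PiLp.norm_apply_le _ _).trans (hx i)))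
      (le_of_abs_le ((PiLp.norm_apply_le _ _).trans (hx i)))
  calc √(∑ i, x i j ^ 2) ≤ √(Fintype.card ι * K ^ 2) := by
        gcongr
        simpa using sum_le_sum fun i (_ : i ∈ univ) ↦ hcoord i
    _ = √(Fintype.card ι) * K := by rw [Real.sqrt_mul (Nat.cast_nonneg _), Real.sqrt_sq hK]

theorem stmt7 (n m d : ℕ) (K_F K_X : ℝ) (hKF : 0 < K_F) (hKX : 0 < K_X)
    (x : Fin n → EuclideanSpace ℝ (Fin m)) (hx : ∀ i, ‖x i‖ ≤ K_X) :
    ∫ σ : Fin n → Fin d → Bool,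
        sSup ((fun F : Matrix (Fin d) (Fin m) ℝ =>
            (1 / (n : ℝ)) * ∑ i, ∑ k, rademacherSign (σ i k) * (F.mulVec (x i)) k) ''
          {F : Matrix (Fin d) (Fin m) ℝ | ∀ k j, |F k j| ≤ K_F})
          ∂((PMF.uniformOfFintype (Fin n → Fin d → Bool)).toMeasure) ≤
      d * m * K_F * K_X / Real.sqrt n := by
  have hcol : ∀ k j, 𝔼 σ : Fin n → Fin d → Bool, |∑ i, rademacherSign (σ i k) * x i j| ≤
      √n * K_X := fun k j ↦
    (expect_abs_sum_mul_le_sqrt_sum_sq (expect_rademacherSign_mul_rademacherSign_curry k) _).trans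
      (by simpa using sqrt_sum_sq_apply_le hKX.le hx j)
  rw [integral_uniformOfFintype_eq_expect]
  calc _ ≤ 𝔼 σ : Fin n → Fin d → Bool,
        1 / n * (K_F * ∑ k, ∑ j, |∑ i, rademacherSign (σ i k) * x i j|) :=
        expect_le_expect fun σ _ ↦ sSup_image_sum_sum_mul_mulVec_le (by positivity) hKF.le
          (fun i k ↦ rademacherSign (σ i k)) _
    _ = 1 / n * (K_F * ∑ k, ∑ j, 𝔼 σ : Fin n → Fin d → Bool,
        |∑ i, rademacherSign (σ i k) * x i j|) := by
      simp_rw [← mul_expect, expect_sum_comm]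
    _ ≤ 1 / n * (K_F * ∑ _k : Fin d, ∑ _j : Fin m, √n * K_X) := by gcongr; exact hcol _ _
    _ = d * m * K_F * K_X / √n := by
      simp only [sum_const, card_univ, Fintype.card_fin, nsmul_eq_mul]
      rw [div_eq_mul_one_div _ √_, ← Real.sqrt_div_self']
      ring
end
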